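/- Define f : [0,10] → [0,10] by f(x) = −(5/3)x + 10 on [0,3], f(x) = x + 2 on (3,5), f(x) = x − 2 on [5,7], and f(x) = −(5/3)x + 50/3 on (7,10]. Then f is surjective, has no fixed point, for every β > 0 the set {x ∈ [0,10] : |f(x) − x| ≤ β} is closed, and condition (b₃) fails: with x₁ = 3, x₂ = 7 and u = 5 one has |f(u) − u| = 2 > 0 = max{|f(x₁) − u|, |f(x₂) − u|}. -/
import Mathlib


noncomputable def f (x : ℝ) : ℝ :=
  if x ≤ 3 then -(5 / 3) * x + 10
  else if x < 5 then x + 2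
  else if x ≤ 7 then x - 2
  else -(5 / 3) * x + 50 / 3

lemma f_key : ∀ x ∈ Set.Icc (0 : ℝ) 10,
    |f x - x| = max (10 - (8/3) * x) (max 2 ((8/3) * x - 50/3)) := by
  intro x hx
  obtain ⟨h0, h10⟩ := hx
  unfold f
  split_ifs with h1 h2 h3
  · have e1 : max (2 : ℝ) ((8/3) * x - 50/3) = 2 := max_eq_left (by linarith)
    rw [e1, max_eq_left (by linarith), abs_of_nonneg (by linarith)]
    ring
  · have e1 : max (2 : ℝ) ((8/3) * x - 50/3) = 2 := max_eq_left (by linarith)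
    rw [e1, max_eq_right (by linarith)]
    norm_num
  · have e1 : max (2 : ℝ) ((8/3) * x - 50/3) = 2 := max_eq_left (by linarith)
    rw [e1, max_eq_right (by linarith)]
    rw [show x - 2 - x = (-2 : ℝ) by ring, abs_neg, abs_two]
  · have e1 : max (2 : ℝ) ((8/3) * x - 50/3) = (8/3) * x - 50/3 :=
      max_eq_right (by linarith)
    rw [e1, max_eq_right (by linarith), abs_of_nonpos (by linarith)]
    ring

theorem stmt_18 :
    Set.SurjOn f (Set.Icc 0 10) (Set.Icc 0 10) ∧
    (∀ x ∈ Set.Icc (0 : ℝ) 10, f x ≠ x) ∧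
    (∀ β : ℝ, 0 < β → IsClosed {x ∈ Set.Icc (0 : ℝ) 10 | |f x - x| ≤ β}) ∧
    |f 5 - 5| = 2 ∧ max |f 3 - 5| |f 7 - 5| = 0 ∧
    |f 5 - 5| > max |f 3 - 5| |f 7 - 5| := by
  refine ⟨?_, ?_, ?_, ?_, ?_, ?_⟩
  · intro y hy
    obtain ⟨hy0, hy10⟩ := hy
    by_cases h : 5 ≤ y
    · refine ⟨(10 - y) * (3/5), ⟨by linarith, by linarith⟩, ?_⟩
      have hle : (10 - y) * (3/5) ≤ 3 := by linarith
      simp only [f, if_pos hle]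
      ring
    · push_neg at h
      refine ⟨10 - (3/5) * y, ⟨by linarith, by linarith⟩, ?_⟩
      have h7 : (7 : ℝ) < 10 - (3/5) * y := by linarith
      simp only [f, if_neg (by linarith : ¬ (10 - (3/5) * y ≤ 3)),
        if_neg (by linarith : ¬ (10 - (3/5) * y < 5)),
        if_neg (by linarith : ¬ (10 - (3/5) * y ≤ 7))]
      ring
  · intro x hx
    obtain ⟨h0, h10⟩ := hx
    unfold f
    split_ifs with h1 h2 h3 <;> intro h <;> linarith
  · intro β _
    have hset : {x ∈ Set.Icc (0 : ℝ) 10 | |f x - x| ≤ β} =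
        Set.Icc (0 : ℝ) 10 ∩
          (fun x => max (10 - (8/3) * x) (max 2 ((8/3) * x - 50/3))) ⁻¹' Set.Iic β := by
      ext x
      simp only [Set.mem_sep_iff, Set.mem_inter_iff, Set.mem_preimage, Set.mem_Iic]
      constructor
      · rintro ⟨hx, hb⟩
        exact ⟨hx, by rw [← f_key x hx]; exact hb⟩
      · rintro ⟨hx, hb⟩
        exact ⟨hx, by rw [f_key x hx]; exact hb⟩
    rw [hset]
    exact isClosed_Icc.inter (isClosed_Iic.preimage (by fun_prop))
  · norm_num [f]
  · norm_num [f]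
  · norm_num [f]
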